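/- Let n, m ≥ 1, let J ∈ ℝ^{n×n}, let λ ∈ ℝ be a simple eigenvalue of J with eigenvector v ≠ 0, Jv = λv, let V ∈ ℝ^{n×(n−1)} have rank n−1 with Vᵀv = 0, and set Z = V (Vᵀ(J − λI)V)⁻¹ Vᵀ. Let f₁,…,f_m ∈ ℝ and weights w₁,…,w_m ≥ 0. Consider the set S_sym^F = { ‖Z (Σᵢ₌₁ᵐ fᵢ Eᵢ v)‖ / ‖v‖ : E₁,…,E_m ∈ ℝ^{n×n} symmetric (Eᵢᵀ = Eᵢ) with ‖Eᵢ‖_F ≤ wᵢ for all i }. Then the greatest element of S_sym^F equals (1/√2) · ‖Z‖₂ · (Σᵢ₌₁ᵐ |fᵢ| wᵢ): every element of S_sym^F is ≤ this value, and it is attained, e.g. by Eᵢ = sign(fᵢ) wᵢ (pvᵀ + vpᵀ)/(√2 ‖v‖) where p is a unit right singular vector of Z corresponding to its largest singular value. -/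

import Mathlib

/-! Since `Z v = 0`, only the component `r` of `E v` orthogonal to `v` matters. For symmetric `E`,
`2 rᵀ E v = ⟨E, r vᵀ + v rᵀ⟩_F ≤ ‖E‖_F · √2 ‖r‖ ‖v‖` and `rᵀ E v = ‖r‖²`, so `‖r‖ ≤ ‖E‖_F ‖v‖ / √2`;
the triangle inequality gives the upper bound. Conversely, removing the `v`-component of a top right
singular vector `p` of `Z` leaves `q ⊥ v` with `‖q‖ ≤ 1` and `Z q = Z p`, and
`Eᵢ = sign(fᵢ) wᵢ (q vᵀ + v qᵀ) / (√2 ‖v‖)` attains the bound. -/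

open Matrix

/-- Euclidean norm of a vector in `ℝⁿ`. -/
noncomputable def e2norm {n : ℕ} (v : Fin n → ℝ) : ℝ := Real.sqrt (∑ i, v i ^ 2)

/-- Frobenius norm of a real matrix. -/
noncomputable def frobNorm {n m : ℕ} (M : Matrix (Fin n) (Fin m) ℝ) : ℝ :=
  Real.sqrt (∑ i, ∑ j, M i j ^ 2)

/-- Spectral norm: the supremum of `‖M x‖` over Euclidean-unit vectors `x`. -/
noncomputable def specNorm {n m : ℕ} (M : Matrix (Fin n) (Fin m) ℝ) : ℝ :=
  sSup ((fun x => e2norm (M.mulVec x)) '' {x : Fin m → ℝ | e2norm x = 1})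

section EuclideanNorm

variable {n : ℕ}

lemma e2norm_eq_norm_toLp (v : Fin n → ℝ) : e2norm v = ‖WithLp.toLp 2 v‖ := by
  simp [EuclideanSpace.norm_eq, e2norm]

lemma e2norm_nonneg (v : Fin n → ℝ) : 0 ≤ e2norm v := Real.sqrt_nonneg _

lemma e2norm_pos {v : Fin n → ℝ} (hv : v ≠ 0) : 0 < e2norm v := by
  rw [e2norm_eq_norm_toLp]; simpa using hv

lemma e2norm_sq (v : Fin n → ℝ) : e2norm v ^ 2 = v ⬝ᵥ v := by
  rw [e2norm, Real.sq_sqrt (by positivity)]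
  simp [dotProduct, sq]

lemma e2norm_smul (c : ℝ) (v : Fin n → ℝ) : e2norm (c • v) = |c| * e2norm v := by
  simp [e2norm_eq_norm_toLp, norm_smul]

lemma e2norm_sum_le {ι : Type*} (s : Finset ι) (g : ι → Fin n → ℝ) :
    e2norm (∑ i ∈ s, g i) ≤ ∑ i ∈ s, e2norm (g i) := by
  simpa [e2norm_eq_norm_toLp] using norm_sum_le s fun i => WithLp.toLp 2 (g i)

lemma dotProduct_le_e2norm_mul_e2norm (u v : Fin n → ℝ) : u ⬝ᵥ v ≤ e2norm u * e2norm v :=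
  Real.sum_mul_le_sqrt_mul_sqrt _ _ _

lemma setOf_e2norm_eq_one :
    {x : Fin n → ℝ | e2norm x = 1} =
      WithLp.ofLp '' Metric.sphere (0 : EuclideanSpace ℝ (Fin n)) 1 := by
  ext x
  simp only [Set.mem_ofPred_eq, Set.mem_image, mem_sphere_zero_iff_norm, e2norm_eq_norm_toLp]
  exact ⟨fun h => ⟨_, h, rfl⟩, by rintro ⟨y, hy, rfl⟩; exact hy⟩

lemma isCompact_setOf_e2norm_eq_one : IsCompact {x : Fin n → ℝ | e2norm x = 1} := by
  rw [setOf_e2norm_eq_one]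
  exact (isCompact_sphere _ _).image (PiLp.continuous_ofLp 2 _)

lemma continuous_e2norm : Continuous (e2norm : (Fin n → ℝ) → ℝ) := by
  unfold e2norm; fun_prop

end EuclideanNorm

section SpectralNorm

variable {n k : ℕ} (M : Matrix (Fin n) (Fin k) ℝ)

lemma specNorm_nonneg : 0 ≤ specNorm M :=
  Real.sSup_nonneg (by rintro _ ⟨x, -, rfl⟩; exact e2norm_nonneg _)

lemma isCompact_image_e2norm_mulVec :
    IsCompact ((fun x => e2norm (M *ᵥ x)) '' {x : Fin k → ℝ | e2norm x = 1}) :=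
  isCompact_setOf_e2norm_eq_one.image
    (continuous_e2norm.comp (Continuous.matrix_mulVec continuous_const continuous_id))

lemma e2norm_mulVec_le (x : Fin k → ℝ) : e2norm (M *ᵥ x) ≤ specNorm M * e2norm x := by
  rcases eq_or_ne x 0 with rfl | hx
  · simp [e2norm]
  have hpos : 0 < e2norm x := e2norm_pos hx
  have hunit : e2norm ((e2norm x)⁻¹ • x) = 1 := by
    rw [e2norm_smul, abs_inv, abs_of_pos hpos, inv_mul_cancel₀ hpos.ne']
  have hle : e2norm (M *ᵥ ((e2norm x)⁻¹ • x)) ≤ specNorm M :=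
    le_csSup (isCompact_image_e2norm_mulVec M).bddAbove ⟨_, hunit, rfl⟩
  rw [mulVec_smul, e2norm_smul, abs_inv, abs_of_pos hpos, inv_mul_le_iff₀ hpos] at hle
  linarith

lemma exists_e2norm_eq_one_e2norm_mulVec_eq_specNorm [NeZero k] :
    ∃ p, e2norm p = 1 ∧ e2norm (M *ᵥ p) = specNorm M := by
  have hne : {x : Fin k → ℝ | e2norm x = 1}.Nonempty := by
    rw [setOf_e2norm_eq_one]
    exact (NormedSpace.sphere_nonempty.mpr zero_le_one).image _
  exact (isCompact_image_e2norm_mulVec M).sSup_mem (hne.image _)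

end SpectralNorm

section Frobenius

variable {n m : ℕ}

lemma frobNorm_nonneg (M : Matrix (Fin n) (Fin m) ℝ) : 0 ≤ frobNorm M := Real.sqrt_nonneg _

lemma frobNorm_smul (c : ℝ) (M : Matrix (Fin n) (Fin m) ℝ) :
    frobNorm (c • M) = |c| * frobNorm M := by
  simp only [frobNorm, Matrix.smul_apply, smul_eq_mul, mul_pow, ← Finset.mul_sum]
  rw [Real.sqrt_mul (sq_nonneg c), Real.sqrt_sq_eq_abs]

lemma sum_mul_le_frobNorm_mul_frobNorm (A B : Matrix (Fin n) (Fin m) ℝ) :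
    ∑ i, ∑ j, A i j * B i j ≤ frobNorm A * frobNorm B := by
  simpa only [frobNorm, ← Fintype.sum_prod_type'] using
    Real.sum_mul_le_sqrt_mul_sqrt Finset.univ (fun p : Fin n × Fin m => A p.1 p.2)
      (fun p => B p.1 p.2)

end Frobenius

section SymOuter

variable {n : ℕ} (q v : Fin n → ℝ)

def symOuter : Matrix (Fin n) (Fin n) ℝ := vecMulVec q v + vecMulVec v q

lemma symOuter_transpose : (symOuter q v)ᵀ = symOuter q v := by
  simp [symOuter, transpose_vecMulVec, add_comm]

lemma symOuter_mulVec : symOuter q v *ᵥ v = (v ⬝ᵥ v) • q + (q ⬝ᵥ v) • v := by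
  simp [symOuter, add_mulVec, vecMulVec_mulVec]

lemma frobNorm_symOuter_sq :
    frobNorm (symOuter q v) ^ 2 = 2 * ((q ⬝ᵥ q) * (v ⬝ᵥ v) + (q ⬝ᵥ v) ^ 2) := by
  rw [frobNorm, Real.sq_sqrt (by positivity)]
  have hentry : ∀ i j, (q i * v j + v i * q j) ^ 2
      = q i ^ 2 * v j ^ 2 + v i ^ 2 * q j ^ 2 + 2 * ((q i * v i) * (q j * v j)) := by
    intro i j; ring
  simp only [symOuter, Matrix.add_apply, vecMulVec_apply, hentry, Finset.sum_add_distrib,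
    ← Finset.mul_sum, ← Finset.sum_mul, dotProduct, sq]
  ring

lemma frobNorm_symOuter_of_dotProduct_eq_zero (hqv : q ⬝ᵥ v = 0) :
    frobNorm (symOuter q v) = √2 * (e2norm q * e2norm v) := by
  refine (sq_eq_sq₀ (frobNorm_nonneg _) (by positivity [e2norm_nonneg q, e2norm_nonneg v])).1 ?_
  rw [frobNorm_symOuter_sq, hqv, mul_pow, mul_pow, Real.sq_sqrt zero_le_two, e2norm_sq, e2norm_sq]
  ring

variable {q v} {E : Matrix (Fin n) (Fin n) ℝ}

lemma sum_symOuter_mul_of_transpose_eq (hE : Eᵀ = E) :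
    ∑ i, ∑ j, symOuter q v i j * E i j = 2 * (q ⬝ᵥ E *ᵥ v) := by
  have hvec : ∀ a b : Fin n → ℝ, ∑ i, ∑ j, vecMulVec a b i j * E i j = a ⬝ᵥ E *ᵥ b := by
    intro a b
    simp only [vecMulVec_apply, dotProduct, mulVec, Finset.mul_sum]
    exact Finset.sum_congr rfl fun i _ => Finset.sum_congr rfl fun j _ => by ring
  have hswap : v ⬝ᵥ E *ᵥ q = q ⬝ᵥ E *ᵥ v := by
    rw [dotProduct_mulVec, ← mulVec_transpose, hE, dotProduct_comm]
  simp only [symOuter, Matrix.add_apply, add_mul, Finset.sum_add_distrib, hvec, hswap]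
  ring

lemma sqrt_two_mul_dotProduct_mulVec_le (hE : Eᵀ = E) (hqv : q ⬝ᵥ v = 0) :
    √2 * (q ⬝ᵥ E *ᵥ v) ≤ frobNorm E * (e2norm q * e2norm v) := by
  have h := sum_mul_le_frobNorm_mul_frobNorm (symOuter q v) E
  rw [sum_symOuter_mul_of_transpose_eq hE, frobNorm_symOuter_of_dotProduct_eq_zero q v hqv] at h
  rw [← mul_le_mul_iff_of_pos_left (by positivity : (0:ℝ) < √2)]
  calc √2 * (√2 * (q ⬝ᵥ E *ᵥ v)) = 2 * (q ⬝ᵥ E *ᵥ v) := by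
        rw [← mul_assoc, Real.mul_self_sqrt zero_le_two]
    _ ≤ √2 * (e2norm q * e2norm v) * frobNorm E := h
    _ = √2 * (frobNorm E * (e2norm q * e2norm v)) := by ring

end SymOuter

section Rejection

variable {n : ℕ} (v b : Fin n → ℝ)

noncomputable def rejection : Fin n → ℝ := b - (b ⬝ᵥ v / v ⬝ᵥ v) • v

lemma rejection_dotProduct : rejection v b ⬝ᵥ v = 0 := by
  rcases eq_or_ne v 0 with rfl | hv
  · simp
  · have hvv : v ⬝ᵥ v ≠ 0 := by simpa [dotProduct_self_eq_zero] using hv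
    simp [rejection, sub_dotProduct, div_mul_cancel₀ _ hvv]

lemma rejection_dotProduct_self : rejection v b ⬝ᵥ rejection v b = rejection v b ⬝ᵥ b := by
  nth_rewrite 2 [rejection]
  rw [dotProduct_sub, dotProduct_smul, rejection_dotProduct, smul_zero, sub_zero]

lemma e2norm_rejection_le : e2norm (rejection v b) ≤ e2norm b := by
  have h := dotProduct_le_e2norm_mul_e2norm (rejection v b) b
  rw [← rejection_dotProduct_self, ← e2norm_sq, sq] at h
  nlinarith [e2norm_nonneg (rejection v b), e2norm_nonneg b]

lemma mulVec_rejection {k : ℕ} {Z : Matrix (Fin k) (Fin n) ℝ} (hZv : Z *ᵥ v = 0) :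
    Z *ᵥ rejection v b = Z *ᵥ b := by
  simp [rejection, mulVec_sub, mulVec_smul, hZv]

lemma sqrt_two_mul_e2norm_rejection_mulVec_le {E : Matrix (Fin n) (Fin n) ℝ} (hE : Eᵀ = E) :
    √2 * e2norm (rejection v (E *ᵥ v)) ≤ frobNorm E * e2norm v := by
  set r := rejection v (E *ᵥ v)
  have h := sqrt_two_mul_dotProduct_mulVec_le hE (rejection_dotProduct v (E *ᵥ v))
  rw [← rejection_dotProduct_self, ← e2norm_sq] at h
  rcases (e2norm_nonneg r).eq_or_lt with h0 | h0
  · rw [← h0, mul_zero]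
    exact mul_nonneg (frobNorm_nonneg E) (e2norm_nonneg v)
  · nlinarith

end Rejection

section Sensitivity

variable {n m k : ℕ} {Z : Matrix (Fin k) (Fin n) ℝ} {v : Fin n → ℝ}

lemma sqrt_two_mul_e2norm_mulVec_mulVec_le (hZv : Z *ᵥ v = 0) {E : Matrix (Fin n) (Fin n) ℝ}
    (hE : Eᵀ = E) : √2 * e2norm (Z *ᵥ E *ᵥ v) ≤ specNorm Z * frobNorm E * e2norm v := by
  rw [← mulVec_rejection v _ hZv]
  calc √2 * e2norm (Z *ᵥ rejection v (E *ᵥ v))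
      ≤ √2 * (specNorm Z * e2norm (rejection v (E *ᵥ v))) := by
        gcongr; exact e2norm_mulVec_le Z _
    _ = specNorm Z * (√2 * e2norm (rejection v (E *ᵥ v))) := by ring
    _ ≤ specNorm Z * (frobNorm E * e2norm v) :=
        mul_le_mul_of_nonneg_left (sqrt_two_mul_e2norm_rejection_mulVec_le v hE)
          (specNorm_nonneg Z)
    _ = specNorm Z * frobNorm E * e2norm v := by ring

lemma e2norm_mulVec_sum_le (hZv : Z *ᵥ v = 0) (f w : Fin m → ℝ)
    {E : Fin m → Matrix (Fin n) (Fin n) ℝ} (hE : ∀ i, (E i)ᵀ = E i)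
    (hEw : ∀ i, frobNorm (E i) ≤ w i) :
    e2norm (Z *ᵥ ∑ i, f i • E i *ᵥ v) ≤ 1 / √2 * specNorm Z * (∑ i, |f i| * w i) * e2norm v := by
  have hterm : ∀ i, e2norm (Z *ᵥ E i *ᵥ v) ≤ specNorm Z * w i * e2norm v / √2 := by
    intro i
    rw [le_div_iff₀' (by positivity)]
    refine (sqrt_two_mul_e2norm_mulVec_mulVec_le hZv (hE i)).trans ?_
    exact mul_le_mul_of_nonneg_right (mul_le_mul_of_nonneg_left (hEw i) (specNorm_nonneg Z))
      (e2norm_nonneg v)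
  calc e2norm (Z *ᵥ ∑ i, f i • E i *ᵥ v)
      = e2norm (∑ i, f i • Z *ᵥ E i *ᵥ v) := by simp [mulVec_sum, mulVec_smul]
    _ ≤ ∑ i, |f i| * e2norm (Z *ᵥ E i *ᵥ v) := by
        simpa only [e2norm_smul] using e2norm_sum_le Finset.univ fun i => f i • Z *ᵥ E i *ᵥ v
    _ ≤ ∑ i, |f i| * (specNorm Z * w i * e2norm v / √2) := by
        gcongr with i; exact hterm i
    _ = 1 / √2 * specNorm Z * (∑ i, |f i| * w i) * e2norm v := by
        simp only [Finset.mul_sum, Finset.sum_mul]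
        exact Finset.sum_congr rfl fun i _ => by ring

lemma exists_e2norm_mulVec_sum_eq [NeZero n] (hZv : Z *ᵥ v = 0) (hv : v ≠ 0) (f : Fin m → ℝ)
    {w : Fin m → ℝ} (hw : ∀ i, 0 ≤ w i) :
    ∃ E : Fin m → Matrix (Fin n) (Fin n) ℝ, (∀ i, (E i)ᵀ = E i) ∧ (∀ i, frobNorm (E i) ≤ w i) ∧
      e2norm (Z *ᵥ ∑ i, f i • E i *ᵥ v) = 1 / √2 * specNorm Z * (∑ i, |f i| * w i) * e2norm v := by
  obtain ⟨p, hp, hZp⟩ := exists_e2norm_eq_one_e2norm_mulVec_eq_specNorm Z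
  -- `q` need not be a unit vector: `Z q = Z p` already has norm `‖Z‖₂`, and `‖q‖ ≤ 1` suffices.
  set q := rejection v p
  have hqv : q ⬝ᵥ v = 0 := rejection_dotProduct v p
  have hq : e2norm q ≤ 1 := hp ▸ e2norm_rejection_le v p
  have hvpos : 0 < e2norm v := e2norm_pos hv
  have hW : 0 ≤ ∑ i, |f i| * w i := Finset.sum_nonneg fun i _ => mul_nonneg (abs_nonneg _) (hw i)
  set c : Fin m → ℝ := fun i => SignType.sign (f i) * w i / (√2 * e2norm v)
  refine ⟨fun i => c i • symOuter q v, fun i => by rw [transpose_smul, symOuter_transpose],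
    fun i => ?_, ?_⟩
  · have hsign : |(SignType.sign (f i) : ℝ)| ≤ 1 := by cases SignType.sign (f i) <;> simp
    rw [frobNorm_smul, frobNorm_symOuter_of_dotProduct_eq_zero q v hqv]
    have hc : |c i| * (√2 * e2norm v) = |(SignType.sign (f i) : ℝ)| * w i := by
      simp only [c, abs_div, abs_mul, abs_of_nonneg (hw i),
        abs_of_pos (by positivity : 0 < √2 * e2norm v)]
      field_simp
    calc |c i| * (√2 * (e2norm q * e2norm v))
        = |(SignType.sign (f i) : ℝ)| * w i * e2norm q := by rw [← hc]; ring
      _ ≤ 1 * w i * 1 := by have := hw i; gcongr; exact e2norm_nonneg q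
      _ = w i := by ring
  · have hsum : ∑ i, f i • (c i • symOuter q v) *ᵥ v
        = ((∑ i, |f i| * w i) * e2norm v / √2) • q := by
      simp only [smul_mulVec, symOuter_mulVec, hqv, zero_smul, add_zero, smul_smul,
        ← Finset.sum_smul]
      congr 1
      rw [← e2norm_sq, Finset.sum_mul, Finset.sum_div]
      refine Finset.sum_congr rfl fun i _ => ?_
      rw [← self_mul_sign (f i)]
      simp only [c]
      field_simp
    rw [hsum, mulVec_smul, mulVec_rejection v p hZv, e2norm_smul, hZp,
      abs_of_nonneg (div_nonneg (mul_nonneg hW hvpos.le) (Real.sqrt_nonneg 2))]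
    ring

end Sensitivity

theorem symmetric_eigenvector_condition_number_frobenius_general
    {n m : ℕ}
    (J : Matrix (Fin n) (Fin n) ℝ) (lam : ℝ)
    (v : Fin n → ℝ) (hv : v ≠ 0)
    (V : Matrix (Fin n) (Fin (n - 1)) ℝ)
    (hVv : Vᵀ.mulVec v = 0)
    (f w : Fin m → ℝ) (hw : ∀ i, 0 ≤ w i) :
    IsGreatest
      {s : ℝ | ∃ E : Fin m → Matrix (Fin n) (Fin n) ℝ,
        (∀ i, (E i)ᵀ = E i) ∧
        (∀ i, frobNorm (E i) ≤ w i) ∧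
        s = e2norm ((V * (Vᵀ * (J - lam • 1) * V)⁻¹ * Vᵀ).mulVec
              (∑ i, f i • (E i).mulVec v)) / e2norm v}
      ((1 / Real.sqrt 2) *
        specNorm (V * (Vᵀ * (J - lam • 1) * V)⁻¹ * Vᵀ) * ∑ i, |f i| * w i) := by
  set Z := V * (Vᵀ * (J - lam • 1) * V)⁻¹ * Vᵀ
  have hZv : Z *ᵥ v = 0 := by simp only [Z, ← mulVec_mulVec, hVv, mulVec_zero]
  have hvpos : 0 < e2norm v := e2norm_pos hv
  have : NeZero n := ⟨by rintro rfl; exact hv (Subsingleton.elim _ _)⟩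
  constructor
  · obtain ⟨E, hE, hEw, hZE⟩ := exists_e2norm_mulVec_sum_eq hZv hv f hw
    exact ⟨E, hE, hEw, by rw [hZE, mul_div_cancel_right₀ _ hvpos.ne']⟩
  · rintro s ⟨E, hE, hEw, rfl⟩
    rw [div_le_iff₀ hvpos]
    exact e2norm_mulVec_sum_le hZv f w hE hEw

/-- for symmetric perturbations measured in the Frobenius norm,
the eigenvector condition number equals `(1/√2) ‖Z‖₂ Σᵢ |fᵢ| wᵢ`. -/
theorem symmetric_eigenvector_condition_number_frobenius
    {n m : ℕ} (hn : 1 ≤ n) (hm : 1 ≤ m)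
    (J : Matrix (Fin n) (Fin n) ℝ) (lam : ℝ)
    (hsimple : Polynomial.rootMultiplicity lam J.charpoly = 1)
    (v : Fin n → ℝ) (hv : v ≠ 0) (heig : J.mulVec v = lam • v)
    (V : Matrix (Fin n) (Fin (n - 1)) ℝ)
    (hrank : V.rank = n - 1) (hVv : Vᵀ.mulVec v = 0)
    (f w : Fin m → ℝ) (hw : ∀ i, 0 ≤ w i) :
    IsGreatest
      {s : ℝ | ∃ E : Fin m → Matrix (Fin n) (Fin n) ℝ,
        (∀ i, (E i)ᵀ = E i) ∧
        (∀ i, frobNorm (E i) ≤ w i) ∧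
        s = e2norm ((V * (Vᵀ * (J - lam • 1) * V)⁻¹ * Vᵀ).mulVec
              (∑ i, f i • (E i).mulVec v)) / e2norm v}
      ((1 / Real.sqrt 2) *
        specNorm (V * (Vᵀ * (J - lam • 1) * V)⁻¹ * Vᵀ) * ∑ i, |f i| * w i) :=
  symmetric_eigenvector_condition_number_frobenius_general J lam v hv V hVv f w hw
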